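/- For α = 1, the coefficient c₁ = (2 sin(θ₁/2)/(α₁² sin²θ₁ √N))·(cos θ₁ + 1/(2N − 1)) satisfies c₁ = 1 + o(1) as N → ∞, and for fixed α > 1 it satisfies c₁ = 1/√2 + o(1), where cos θ₁, θ₁ = arccos(cos θ₁), and α₁² = cos²θ₁ + 1/(N + N^α − 1) are as in the spectral analysis. -/

import Mathlib

open Filter Real Asymptotics

noncomputable def cosTheta1 (α N : ℝ) : ℝ :=
  ((N - 2) + Real.sqrt (N ^ 2 - 4 * N ^ α + 4 * N ^ (2 * α) / (N + N ^ α - 1)))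
    / (2 * (N - 1))

noncomputable def theta1 (α N : ℝ) : ℝ := Real.arccos (cosTheta1 α N)

noncomputable def alpha1Sq (α N : ℝ) : ℝ := (cosTheta1 α N) ^ 2 + 1 / (N + N ^ α - 1)

noncomputable def c1 (α N : ℝ) : ℝ :=
  2 * Real.sin (theta1 α N / 2) / (alpha1Sq α N * (Real.sin (theta1 α N)) ^ 2 * Real.sqrt N)
    * (cosTheta1 α N + 1 / (N + N ^ α - 1))

/-!
With `q = N^α / (N + N^α - 1)`, the discriminant under the root in `cos θ₁` is
`N² - 4q(N - 1)`, and rationalising gives `1 - cos θ₁ = 2q / (N + √(N² - 4q(N - 1)))`,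
so `N (1 - cos θ₁) → L` whenever `q → L`. Since `sin²θ₁ = (1 - cos θ₁)(1 + cos θ₁)` and
`sin(θ₁/2) = √((1 - cos θ₁)/2)`, the coefficient is
`c₁ = √2 (cos θ₁ + o(1)) / (α₁² (1 + cos θ₁) √(N (1 - cos θ₁))) → 1 / √(2L)`.
Finally `q → 1/2` for `α = 1` and `q → 1` for `α > 1`.
-/

open Topology

noncomputable def powShare (α N : ℝ) : ℝ := N ^ α / (N + N ^ α - 1)

noncomputable def cosTheta1Disc (α N : ℝ) : ℝ :=
  N ^ 2 - 4 * N ^ α + 4 * N ^ (2 * α) / (N + N ^ α - 1)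

section Algebra

variable {α N : ℝ}

lemma cosTheta1_eq : cosTheta1 α N = ((N - 2) + √(cosTheta1Disc α N)) / (2 * (N - 1)) := rfl

lemma inv_powShare (hN : 0 < N) : (powShare α N)⁻¹ = 1 + (N - 1) / N ^ α := by
  have : N ^ α ≠ 0 := (rpow_pos_of_pos hN α).ne'
  rw [powShare, inv_div]
  field_simp
  ring

lemma powShare_le_one (hN : 1 ≤ N) : powShare α N ≤ 1 := by
  have hp : 0 < N ^ α := rpow_pos_of_pos (by linarith) α
  exact div_le_one_of_le₀ (by linarith) (by linarith)

lemma cosTheta1Disc_eq (hN : 1 ≤ N) :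
    cosTheta1Disc α N = N ^ 2 - 4 * powShare α N * (N - 1) := by
  have hp : 0 < N ^ α := rpow_pos_of_pos (by linarith) α
  have hM : N + N ^ α - 1 ≠ 0 := by linarith
  rw [cosTheta1Disc, powShare, mul_comm 2 α, rpow_mul (by linarith), rpow_two]
  field_simp
  ring

lemma sq_sub_two_le_cosTheta1Disc (hN : 1 ≤ N) : (N - 2) ^ 2 ≤ cosTheta1Disc α N := by
  rw [cosTheta1Disc_eq hN]
  nlinarith [powShare_le_one (α := α) hN]

lemma one_sub_cosTheta1 (hN : 1 < N) :
    1 - cosTheta1 α N = 2 * powShare α N / (N + √(cosTheta1Disc α N)) := by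
  have hs : √(cosTheta1Disc α N) ^ 2 = N ^ 2 - 4 * powShare α N * (N - 1) := by
    rw [sq_sqrt ((sq_nonneg _).trans (sq_sub_two_le_cosTheta1Disc hN.le)),
      cosTheta1Disc_eq hN.le]
  have : 0 < N + √(cosTheta1Disc α N) := by positivity
  have : N - 1 ≠ 0 := by linarith
  rw [cosTheta1_eq]
  field_simp
  linear_combination -hs

end Algebra

lemma two_mul_sin_half_arccos_div_sin_arccos_sq {c : ℝ} (h₁ : -1 < c) (h₂ : c < 1) :
    2 * sin (arccos c / 2) / sin (arccos c) ^ 2 = √2 / ((1 + c) * √(1 - c)) := by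
  have hsin : sin (arccos c) ^ 2 = (1 - c) * (1 + c) := by
    rw [sin_arccos, sq_sqrt (by nlinarith)]
    ring
  have hhalf : sin (arccos c / 2) = √(1 - c) / √2 := by
    rw [sin_half_eq_sqrt (arccos_nonneg c) ((arccos_le_pi c).trans (by linarith [pi_pos])),
      cos_arccos h₁.le h₂.le, sqrt_div' _ zero_le_two]
  have hs : √(1 - c) ^ 2 = 1 - c := sq_sqrt (by linarith)
  have : 0 < √(1 - c) := sqrt_pos.mpr (by linarith)
  have : 1 + c ≠ 0 := by linarith
  have : 1 - c ≠ 0 := by linarith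
  rw [hsin, hhalf]
  field_simp
  rw [hs, sq_sqrt zero_le_two]
  ring

lemma c1_eq {α N : ℝ} (hN : 0 ≤ N) (h₁ : -1 < cosTheta1 α N) (h₂ : cosTheta1 α N < 1) :
    c1 α N = √2 * (cosTheta1 α N + 1 / (N + N ^ α - 1)) /
      (alpha1Sq α N * (1 + cosTheta1 α N) * √(N * (1 - cosTheta1 α N))) := by
  have h := two_mul_sin_half_arccos_div_sin_arccos_sq h₁ h₂
  rw [c1, theta1, sqrt_mul hN]
  calc 2 * sin (arccos (cosTheta1 α N) / 2) /
        (alpha1Sq α N * sin (arccos (cosTheta1 α N)) ^ 2 * √N) *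
        (cosTheta1 α N + 1 / (N + N ^ α - 1))
      = 2 * sin (arccos (cosTheta1 α N) / 2) / sin (arccos (cosTheta1 α N)) ^ 2 *
          (cosTheta1 α N + 1 / (N + N ^ α - 1)) / (alpha1Sq α N * √N) := by ring
    _ = _ := by
      rw [h]
      generalize 1 + cosTheta1 α N = u
      ring

section Limits

variable {α L : ℝ}

lemma tendsto_one_div_add_rpow_sub_one :
    Tendsto (fun N : ℝ => 1 / (N + N ^ α - 1)) atTop (𝓝 0) := by
  refine Tendsto.div_atTop tendsto_const_nhds (tendsto_atTop_mono' atTop ?_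
    (tendsto_atTop_add_const_right atTop (-1) tendsto_id))
  filter_upwards [eventually_gt_atTop 0] with N hN
  have := rpow_pos_of_pos hN α
  simp only [id]
  linarith

lemma tendsto_sqrt_cosTheta1Disc_div (hq : Tendsto (powShare α) atTop (𝓝 L)) :
    Tendsto (fun N => √(cosTheta1Disc α N) / N) atTop (𝓝 1) := by
  have hinv : Tendsto (fun N : ℝ => N⁻¹) atTop (𝓝 0) := tendsto_inv_atTop_zero
  have h : Tendsto (fun N => √(1 - 4 * powShare α N * (N⁻¹ - N⁻¹ ^ 2))) atTop
      (𝓝 √(1 - 4 * L * (0 - 0 ^ 2))) :=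
    (tendsto_const_nhds.sub ((tendsto_const_nhds.mul hq).mul (hinv.sub (hinv.pow 2)))).sqrt
  rw [show (1 : ℝ) - 4 * L * (0 - 0 ^ 2) = 1 by ring, sqrt_one] at h
  refine h.congr' ?_
  filter_upwards [eventually_ge_atTop 1] with N hN
  have hdiv : √(cosTheta1Disc α N / N ^ 2) = √(cosTheta1Disc α N) / N := by
    rw [sqrt_div' _ (sq_nonneg N), sqrt_sq (by linarith)]
  have : N ≠ 0 := by positivity
  rw [← hdiv, cosTheta1Disc_eq hN]
  congr 1
  field_simp

lemma tendsto_mul_one_sub_cosTheta1 (hq : Tendsto (powShare α) atTop (𝓝 L)) :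
    Tendsto (fun N => N * (1 - cosTheta1 α N)) atTop (𝓝 L) := by
  have h : Tendsto (fun N => 2 * powShare α N / (1 + √(cosTheta1Disc α N) / N)) atTop
      (𝓝 (2 * L / (1 + 1))) :=
    (tendsto_const_nhds.mul hq).div (tendsto_const_nhds.add
      (tendsto_sqrt_cosTheta1Disc_div hq)) (by norm_num)
  rw [show 2 * L / (1 + 1) = L by ring] at h
  refine h.congr' ?_
  filter_upwards [eventually_gt_atTop 1] with N hN
  have : 0 < N + √(cosTheta1Disc α N) := by positivity
  rw [one_sub_cosTheta1 hN]
  field_simp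

lemma tendsto_cosTheta1 (hq : Tendsto (powShare α) atTop (𝓝 L)) :
    Tendsto (cosTheta1 α) atTop (𝓝 1) := by
  have h := tendsto_const_nhds (x := (1 : ℝ)).sub
    ((tendsto_mul_one_sub_cosTheta1 hq).mul (tendsto_inv_atTop_zero (𝕜 := ℝ)))
  rw [mul_zero, sub_zero] at h
  refine h.congr' ?_
  filter_upwards [eventually_gt_atTop 0] with N hN
  field_simp
  ring

lemma tendsto_alpha1Sq (hq : Tendsto (powShare α) atTop (𝓝 L)) :
    Tendsto (alpha1Sq α) atTop (𝓝 1) := by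
  have h := ((tendsto_cosTheta1 hq).pow 2).add (tendsto_one_div_add_rpow_sub_one (α := α))
  rw [one_pow, add_zero] at h
  exact h

lemma tendsto_c1 (hL : 0 < L) (hq : Tendsto (powShare α) atTop (𝓝 L)) :
    Tendsto (c1 α) atTop (𝓝 (1 / √(2 * L))) := by
  have hcos := tendsto_cosTheta1 hq
  have hNc := tendsto_mul_one_sub_cosTheta1 hq
  have h : Tendsto (fun N => √2 * (cosTheta1 α N + 1 / (N + N ^ α - 1)) /
      (alpha1Sq α N * (1 + cosTheta1 α N) * √(N * (1 - cosTheta1 α N)))) atTop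
      (𝓝 (√2 * (1 + 0) / (1 * (1 + 1) * √L))) :=
    (tendsto_const_nhds.mul (hcos.add tendsto_one_div_add_rpow_sub_one)).div
      (((tendsto_alpha1Sq hq).mul (tendsto_const_nhds.add hcos)).mul hNc.sqrt)
      (by positivity)
  have hlim : √2 * (1 + 0) / (1 * (1 + 1) * √L) = 1 / √(2 * L) := by
    rw [sqrt_mul zero_le_two]
    field_simp
    rw [sq_sqrt zero_le_two]
    norm_num
  rw [hlim] at h
  refine h.congr' ?_
  have hlt : ∀ᶠ N : ℝ in atTop, cosTheta1 α N < 1 := by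
    filter_upwards [hNc.eventually (eventually_gt_nhds hL), eventually_gt_atTop 0]
      with N hpos hN
    nlinarith
  filter_upwards [hcos.eventually (eventually_gt_nhds (by norm_num : (-1 : ℝ) < 1)), hlt,
    eventually_ge_atTop 0] with N h₁ h₂ hN
  exact (c1_eq hN h₁ h₂).symm

lemma tendsto_powShare_one : Tendsto (powShare 1) atTop (𝓝 (1 / 2)) := by
  have h := ((tendsto_const_nhds (x := (2 : ℝ))).sub
    (tendsto_inv_atTop_zero (𝕜 := ℝ))).inv₀ (by norm_num)
  rw [sub_zero, ← one_div] at h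
  refine h.congr' ?_
  filter_upwards [eventually_gt_atTop 0] with N hN
  rw [← inv_inv (powShare 1 N), inv_powShare hN, rpow_one]
  field_simp
  ring

lemma tendsto_powShare_of_one_lt (hα : 1 < α) : Tendsto (powShare α) atTop (𝓝 1) := by
  have h := ((tendsto_const_nhds (x := (1 : ℝ))).add
    ((tendsto_rpow_neg_atTop (by linarith : 0 < α - 1)).sub
      (tendsto_rpow_atTop (by linarith : 0 < α)).inv_tendsto_atTop)).inv₀ (by norm_num)
  rw [sub_zero, add_zero, inv_one] at h
  refine h.congr' ?_
  filter_upwards [eventually_gt_atTop 0] with N hN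
  rw [← inv_inv (powShare α N), inv_powShare hN, neg_sub, rpow_sub hN, rpow_one, sub_div]
  simp only [Pi.inv_apply, one_div]

end Limits

theorem c1_limit_alpha_ge_one :
    (Tendsto (fun N : ℝ => c1 1 N) atTop (nhds 1)) ∧
    (∀ α : ℝ, 1 < α →
      Tendsto (fun N : ℝ => c1 α N) atTop (nhds (1 / Real.sqrt 2))) := by
  refine ⟨?_, fun α hα => ?_⟩
  · simpa using tendsto_c1 (by norm_num) tendsto_powShare_one
  · simpa using tendsto_c1 one_pos (tendsto_powShare_of_one_lt hα)
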